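/- arXiv:0906.3257 — 3 statements merged into one kernel-verified Lean document; each statement's English description precedes it below -/
import Mathlib

section
/- If T is a sound (every provable statement is true) recursively enumerable theory whose language can express membership statements 'n ∉ X' for a recursively enumerable but non-recursive set X, then there exists a natural number n₀ such that n₀ ∉ X is true but T does not prove 'n₀ ∉ X'. -/
/-!
If the sound r.e. theory proved every true `n ∉ X`, its theorems of that form would enumerate
exactly the complement of `X`; an r.e. set with r.e. complement is computable (Post's theorem).
-/

/-- A predicate on ℕ is recursively enumerable if it is the domain of a
partial recursive function. -/
def REPredNat (p : ℕ → Prop) : Prop :=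
  ∃ f : ℕ →. ℕ, Partrec f ∧ ∀ n, p n ↔ (f n).Dom

theorem REPredNat.rePred {p : ℕ → Prop} (h : REPredNat p) : REPred p := by
  obtain ⟨f, hf, hp⟩ := h
  exact hf.dom_re.of_eq fun n => (hp n).symm

theorem REPred.exists_not_and_not_of_imp_not {α : Type*} [Primcodable α] {p q : α → Prop}
    (hp : REPred p) (hpc : ¬ ComputablePred p) (hq : REPred q) (hqp : ∀ a, q a → ¬ p a) :
    ∃ a, ¬ p a ∧ ¬ q a := by
  by_contra! hcompl
  have hq_eq_compl : ∀ a, q a ↔ ¬ p a := fun a => ⟨hqp a, hcompl a⟩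
  exact hpc <| ComputablePred.computable_iff_re_compl_re'.2 ⟨hp, hq.of_eq hq_eq_compl⟩

/-- If `X` is r.e. but not recursive and `ProvNotIn n` expresses that the sound,
recursively enumerable theory `T` proves the sentence "n ∉ X" (soundness: whatever
is proved of this form is true; the set of provable such sentences is r.e.),
then some true sentence "n₀ ∉ X" is unprovable in `T`. -/
theorem incompleteness_from_nonrecursive_set
    (X : ℕ → Prop) (hXre : REPredNat X) (hXnotrec : ¬ ComputablePred X)
    (ProvNotIn : ℕ → Prop)
    (hProvRe : REPredNat ProvNotIn)
    (hSound : ∀ n, ProvNotIn n → ¬ X n) :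
    ∃ n₀, ¬ X n₀ ∧ ¬ ProvNotIn n₀ :=
  hXre.rePred.exists_not_and_not_of_imp_not hXnotrec hProvRe.rePred hSound
end

section
/- The set of Kolmogorov-random numbers {x : K(x) ≥ x} is not recursive (in fact its complement {x : K(x) < x} is recursively enumerable but the set itself is not recursively enumerable for x beyond some bound, hence the set is not recursive). -/
/-- The e-th partial recursive function. -/
def phi (e : ℕ) : ℕ →. ℕ := (Denumerable.ofNat Nat.Partrec.Code e).eval

/-- A predicate on ℕ is recursively enumerable if it is the domain of a
partial recursive function. -/
def REPred' (p : ℕ → Prop) : Prop :=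
  ∃ f : ℕ →. ℕ, Partrec f ∧ ∀ n, p n ↔ (f n).Dom

/-- Kolmogorov complexity: the least index `e` such that φ_e(0) = x. -/
noncomputable def Kc (x : ℕ) : ℕ := sInf {e | x ∈ phi e 0}

/-!
The compressible numbers are enumerated by dovetailing: `Kc x < x` iff some program `e < x`
prints `x` within some number of steps, and that last relation is primitive recursive.

For the random numbers, `Kc` is injective, so pigeonhole makes the random numbers unbounded.
If they were decidable, `m ↦ (the least random number above m)` would be computable. Kleene's
recursion theorem then gives a program `e` that prints this number for `m = e`, so a random number
above `e` has complexity at most `e`: Berry's paradox.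
-/

open Nat.Partrec (Code)
open Nat.Partrec.Code Encodable

lemma phi_encode (c : Code) : phi (encode c) = c.eval := by
  simp [phi]

lemma Kc_mem (x : ℕ) : x ∈ phi (Kc x) 0 :=
  Nat.sInf_mem (s := {e | x ∈ phi e 0}) ⟨encode (Code.const x), by
    simp [phi_encode, eval_const]⟩

lemma Kc_le {x e : ℕ} (h : x ∈ phi e 0) : Kc x ≤ e := Nat.sInf_le h

lemma Kc_injective : Function.Injective Kc := fun x y h =>
  Part.mem_unique (h ▸ Kc_mem x) (Kc_mem y)

lemma Kc_lt_iff {x : ℕ} : Kc x < x ↔ ∃ e < x, x ∈ phi e 0 :=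
  ⟨fun h => ⟨Kc x, h, Kc_mem x⟩, fun ⟨_, he, hx⟩ => (Kc_le hx).trans_lt he⟩

lemma rePred'_exists_of_computablePred {q : ℕ → ℕ → Prop}
    (hq : ComputablePred fun p : ℕ × ℕ => q p.1 p.2) : REPred' fun x => ∃ n, q x n := by
  classical
  refine ⟨fun x => Nat.rfind fun n => Part.some (decide (q x n)),
    Partrec.rfind hq.decide.partrec, fun x => ?_⟩
  exact Iff.symm (Nat.rfind_dom.trans (by simp))

/-- `n = ⟨k, e⟩` witnesses that the program `e < x` prints `x` within `k` steps. -/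
def CompressionWitness (x n : ℕ) : Prop :=
  n.unpair.2 < x ∧ evaln n.unpair.1 (Denumerable.ofNat Code n.unpair.2) 0 = some x

lemma computablePred_compressionWitness :
    ComputablePred fun p : ℕ × ℕ => CompressionWitness p.1 p.2 := by
  refine PrimrecPred.computablePred (PrimrecPred.and ?_ ?_)
  · exact Primrec.nat_lt.comp ((Primrec.snd.comp Primrec.unpair).comp Primrec.snd) Primrec.fst
  · have heval : Primrec fun p : ℕ × ℕ =>
        evaln p.2.unpair.1 (Denumerable.ofNat Code p.2.unpair.2) 0 :=
      primrec_evaln.comp <| (((Primrec.fst.comp Primrec.unpair).comp Primrec.snd).pair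
        ((Primrec.ofNat Code).comp ((Primrec.snd.comp Primrec.unpair).comp Primrec.snd))).pair
        (Primrec.const 0)
    exact Primrec.eq.comp heval (Primrec.option_some.comp Primrec.fst)

lemma Kc_lt_iff_exists_compressionWitness {x : ℕ} :
    Kc x < x ↔ ∃ n, CompressionWitness x n := by
  simp only [Kc_lt_iff, phi, evaln_complete, Option.mem_def, CompressionWitness]
  constructor
  · rintro ⟨e, he, k, hk⟩
    exact ⟨Nat.pair k e, by simpa using ⟨he, hk⟩⟩
  · rintro ⟨n, he, hk⟩
    exact ⟨_, he, _, hk⟩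

theorem rePred'_Kc_lt : REPred' fun x => Kc x < x := by
  simpa only [Kc_lt_iff_exists_compressionWitness] using
    rePred'_exists_of_computablePred computablePred_compressionWitness

theorem Nat.exists_le_apply_of_injective {f : ℕ → ℕ} (hf : Function.Injective f) (n : ℕ) :
    ∃ x, n ≤ x ∧ x ≤ f x := by
  by_contra! hlt
  set M := max n ((Finset.range n).sup f + 1)
  -- otherwise `f` would map `{0, …, M}` injectively into `{0, …, M - 1}`
  have hmaps : Set.MapsTo f (Finset.range (M + 1)) (Finset.range M) := by
    intro x hx
    simp only [Finset.coe_range, Set.mem_Iio] at hx ⊢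
    rcases lt_or_ge x n with hxn | hxn
    · have := Finset.le_sup (f := f) (Finset.mem_range.2 hxn)
      omega
    · have := hlt x hxn
      omega
  simpa using Finset.card_le_card_of_injOn f hmaps hf.injOn

theorem exists_Kc_comp_le {g : ℕ → ℕ} (hg : Computable g) : ∃ m, Kc (g m) ≤ m := by
  have hconst : Computable fun c : Code => Code.const (g (encode c)) :=
    primrec_const.to_comp.comp (hg.comp Computable.encode)
  obtain ⟨c, hc⟩ := fixed_point hconst
  refine ⟨encode c, Kc_le ?_⟩
  rw [phi_encode, ← hc, eval_const]
  exact Part.mem_some _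

theorem not_computablePred_le_Kc : ¬ ComputablePred fun x => x ≤ Kc x := by
  classical
  intro h
  have hex : ∀ m, ∃ x, m < x ∧ x ≤ Kc x := fun m =>
    Nat.exists_le_apply_of_injective Kc_injective (m + 1)
  have hP : ComputablePred fun p : ℕ × ℕ => p.1 < p.2 ∧ p.2 ≤ Kc p.2 :=
    ComputablePred.computable_iff.2 ⟨_, Primrec.and.to_comp.comp Primrec.nat_lt.decide.to_comp
      (h.decide.comp Computable.snd), by ext; simp⟩
  obtain ⟨m, hm⟩ := exists_Kc_comp_le (Computable.find hP hex)
  have hnext := Nat.find_spec (hex m)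
  omega

/-- The set of compressible numbers {x : K(x) < x} is recursively enumerable,
but the set of Kolmogorov-random numbers {x : K(x) ≥ x} is not recursive. -/
theorem random_numbers_not_recursive :
    REPred' (fun x => Kc x < x) ∧ ¬ ComputablePred (fun x => x ≤ Kc x) :=
  ⟨rePred'_Kc_lt, not_computablePred_le_Kc⟩
end

section
/- There exists a notation-like index at which the consistency progression is inconsistent: by Kleene's recursion theorem there is e with φ_e(0) = ς(ϑ(e)) (constant function), and for such e the theory T_{ϑ(e)} proves its own consistency Cons_{T_{ϑ(e)}} and is therefore inconsistent by Gödel's second incompleteness theorem — even if the base theory T is sound. -/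
/-- The e-th recursively enumerable set (of Gödel numbers of axioms). -/
def W (e : ℕ) : Set ℕ := {n | (phi e n).Dom}

/-! Kleene's recursion theorem makes the limit index `ϑ(e)` reachable from the fundamental
sequence `φ_e` of its own code: choosing `φ_e` constantly equal to `ς(ϑ(e))` puts
`Cons(T_{ϑ(e)})`, an axiom of `T_{ς(ϑ(e))}`, among the axioms of `T_{ϑ(e)}`. So `T_{ϑ(e)}`
proves its own consistency, and by Gödel's second incompleteness theorem it is inconsistent. -/

theorem exists_phi_eq_self {f : ℕ → ℕ →. ℕ} (hf : Partrec₂ f) : ∃ e, phi e = f e := by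
  obtain ⟨c, hc⟩ := Nat.Partrec.Code.fixed_point₂
    (f := fun c => f (Encodable.encode c)) (hf.comp (Computable.encode.comp Computable.fst) .snd)
  exact ⟨Encodable.encode c, by rw [phi, Denumerable.ofNat_encode, hc]⟩

theorem exists_phi_eq_const_self {f : ℕ → ℕ} (hf : Computable f) :
    ∃ e, ∀ n, phi e n = Part.some (f e) := by
  obtain ⟨e, he⟩ := exists_phi_eq_self (f := fun e _ => Part.some (f e))
    (Computable₂.partrec₂ (hf.comp .fst))
  exact ⟨e, fun n => by rw [he]⟩

section Progression

variable {g : ℕ → ℕ}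

theorem W_subset_W_limit
    (hlim : ∀ e (h : ∀ n, (phi e n).Dom),
      W (g (Nat.pair e 1)) = ⋃ n : ℕ, W (g ((phi e n).get (h n))))
    {e n a : ℕ} (hdom : ∀ n, (phi e n).Dom) (ha : a ∈ phi e n) :
    W (g a) ⊆ W (g (Nat.pair e 1)) := by
  rw [hlim e hdom, ← Part.get_eq_of_mem ha (hdom n)]
  exact Set.subset_iUnion (fun n => W (g ((phi e n).get (hdom n)))) n

theorem consNum_mem_W_succ {consNum : ℕ → ℕ}
    (hsucc : ∀ a, W (g (Nat.pair a 0)) = W (g a) ∪ {consNum (g a)}) (a : ℕ) :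
    consNum (g a) ∈ W (g (Nat.pair a 0)) := by
  rw [hsucc]
  exact Or.inr rfl

end Progression

theorem inconsistent_stage_of_progression_general
    (g : ℕ → ℕ) (consNum : ℕ → ℕ) (Prv : ℕ → ℕ → Prop) (bot : ℕ)
    (hsucc : ∀ a, W (g (Nat.pair a 0)) = W (g a) ∪ {consNum (g a)})
    (hlim : ∀ e (h : ∀ n, (phi e n).Dom),
      W (g (Nat.pair e 1)) = ⋃ n : ℕ, W (g ((phi e n).get (h n))))
    (hax : ∀ e n, n ∈ W e → Prv e n)
    (godel2 : ∀ e, ¬ Prv e bot → ¬ Prv e (consNum e)) :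
    ∃ e : ℕ,
      (∀ n, Nat.pair (Nat.pair e 1) 0 ∈ phi e n) ∧
      Prv (g (Nat.pair e 1)) (consNum (g (Nat.pair e 1))) ∧
      Prv (g (Nat.pair e 1)) bot := by
  obtain ⟨e, he⟩ := exists_phi_eq_const_self (f := fun e => Nat.pair (Nat.pair e 1) 0)
    (Primrec₂.natPair.comp (Primrec₂.natPair.comp .id (.const 1)) (.const 0)).to_comp
  have hmem : ∀ n, Nat.pair (Nat.pair e 1) 0 ∈ phi e n := fun n => he n ▸ Part.mem_some _
  have hcons : consNum (g (Nat.pair e 1)) ∈ W (g (Nat.pair e 1)) :=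
    W_subset_W_limit hlim (fun n => Part.dom_iff_mem.2 ⟨_, hmem n⟩) (hmem 0)
      (consNum_mem_W_succ hsucc _)
  have hprv := hax _ _ hcons
  exact ⟨e, hmem, hprv, by_contra fun hbot => godel2 _ hbot hprv⟩

/-- There is a notation-like index at which a consistency progression becomes
inconsistent. Here `g` assigns to every index `a` a code `g a` of the axiom set
`W (g a)` of the theory `T_a`, with the successor clause
`T_{ς(a)} = T_a + Cons(T_a)` and the limit clause `T_{ϑ(e)} = ⋃_n T_{φ_e(n)}`;
`Prv e n` means the theory axiomatized by `W e` proves the sentence `n`,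
`bot` is the Gödel number of `0 = 1` and `consNum e` that of `Cons(W e)`.
By Kleene's recursion theorem there is `e` with `φ_e` constantly equal to
`ς(ϑ(e))`, and for such `e` the theory `T_{ϑ(e)}` proves its own consistency
and hence — by Gödel's second incompleteness theorem — is inconsistent,
even if the base theory is sound. -/
theorem inconsistent_stage_of_progression
    (g : ℕ → ℕ) (consNum : ℕ → ℕ) (Prv : ℕ → ℕ → Prop) (bot : ℕ)
    (hsucc : ∀ a, W (g (Nat.pair a 0)) = W (g a) ∪ {consNum (g a)})
    (hlim : ∀ e (h : ∀ n, (phi e n).Dom),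
      W (g (Nat.pair e 1)) = ⋃ n : ℕ, W (g ((phi e n).get (h n))))
    (hext : ∀ e e', W e = W e' → ∀ n, Prv e n ↔ Prv e' n)
    (hax : ∀ e n, n ∈ W e → Prv e n)
    (godel2 : ∀ e, ¬ Prv e bot → ¬ Prv e (consNum e)) :
    ∃ e : ℕ,
      (∀ n, Nat.pair (Nat.pair e 1) 0 ∈ phi e n) ∧
      Prv (g (Nat.pair e 1)) (consNum (g (Nat.pair e 1))) ∧
      Prv (g (Nat.pair e 1)) bot :=
  inconsistent_stage_of_progression_general g consNum Prv bot hsucc hlim hax godel2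
end
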